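/- The process P₁ = a.b.0 || b̄.c̄.0 || c.ā.0 is deadlocked and top-complete (hence self-deadlocked), and therefore, being complete, P₁ ∈ CMP \ LF: it is complete but not lock-free. -/
import Mathlib


/-- Finite CCS processes: 0, input prefix a.P, output prefix ā.P, parallel. -/
inductive Proc : Type where
  | nil : Proc
  | inp : ℕ → Proc → Proc
  | out : ℕ → Proc → Proc
  | par : Proc → Proc → Proc

open Proc

/-- Structural equivalence: smallest congruence with unit, commutativity, associativity. -/
inductive StrEq : Proc → Proc → Prop where
  | refl (P) : StrEq P P
  | symm {P Q} : StrEq P Q → StrEq Q P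
  | trans {P Q R} : StrEq P Q → StrEq Q R → StrEq P R
  | nilPar (P) : StrEq (par P nil) P
  | comm (P Q) : StrEq (par P Q) (par Q P)
  | assoc (P Q R) : StrEq (par P (par Q R)) (par (par P Q) R)
  | congPar {P P' Q Q'} : StrEq P P' → StrEq Q Q' → StrEq (par P Q) (par P' Q')
  | congInp (a) {P P'} : StrEq P P' → StrEq (inp a P) (inp a P')
  | congOut (a) {P P'} : StrEq P P' → StrEq (out a P) (out a P')

/-- Reduction: a.P ‖ ā.Q → P ‖ Q, closed under parallel contexts and ≡. -/
inductive Red : Proc → Proc → Prop where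
  | comm (a P Q) : Red (par (inp a P) (out a Q)) (par P Q)
  | parL {P P'} (Q) : Red P P' → Red (par P Q) (par P' Q)
  | parR (P) {Q Q'} : Red Q Q' → Red (par P Q) (par P Q')
  | str {P P' Q Q'} : StrEq P P' → Red P' Q' → StrEq Q' Q → Red P Q

/-- Reflexive-transitive closure of reduction. -/
def Reds : Proc → Proc → Prop := Relation.ReflTransGen Red

/-- The set of names occurring in a process (ignoring polarity). -/
def names : Proc → Finset ℕ
  | nil => ∅
  | inp a P => insert a (names P)
  | out a P => insert a (names P)
  | par P Q => names P ∪ names Q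

/-- Number of input occurrences of a name. -/
def inCount (a : ℕ) : Proc → ℕ
  | nil => 0
  | inp b P => (if b = a then 1 else 0) + inCount a P
  | out _ P => inCount a P
  | par P Q => inCount a P + inCount a Q

/-- Number of output occurrences of a name. -/
def outCount (a : ℕ) : Proc → ℕ
  | nil => 0
  | inp _ P => outCount a P
  | out b P => (if b = a then 1 else 0) + outCount a P
  | par P Q => outCount a P + outCount a Q

/-- Linearity: each name occurs at most once as input and at most once as output. -/
def Linear (P : Proc) : Prop := ∀ a, inCount a P ≤ 1 ∧ outCount a P ≤ 1

/-- in(a,P): P ≡ P' ‖ a.P''. -/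
def InPred (a : ℕ) (P : Proc) : Prop := ∃ P' P'', StrEq P (par P' (inp a P''))

/-- out(a,P): P ≡ P' ‖ ā.P''. -/
def OutPred (a : ℕ) (P : Proc) : Prop := ∃ P' P'', StrEq P (par P' (out a P''))

/-- sync(a,P): both in(a,P) and out(a,P). -/
def SyncPred (a : ℕ) (P : Proc) : Prop := InPred a P ∧ OutPred a P

/-- wait(a,P): in(a,P) exclusive-or out(a,P). -/
def WaitPred (a : ℕ) (P : Proc) : Prop := Xor' (InPred a P) (OutPred a P)

/-- Process contexts C ::= [-] | P‖C | C‖P | α.C. -/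
inductive Ctx : Type where
  | hole : Ctx
  | parL : Proc → Ctx → Ctx
  | parR : Ctx → Proc → Ctx
  | inp : ℕ → Ctx → Ctx
  | out : ℕ → Ctx → Ctx

/-- Filling a process context. -/
def Ctx.fill : Ctx → Proc → Proc
  | .hole, Q => Q
  | .parL P C, Q => Proc.par P (C.fill Q)
  | .parR C P, Q => Proc.par (C.fill Q) P
  | .inp a C, Q => Proc.inp a (C.fill Q)
  | .out a C, Q => Proc.out a (C.fill Q)

/-- Evaluation contexts E ::= [-] | P‖E | E‖P. -/
inductive ECtx : Type where
  | hole : ECtx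
  | parL : Proc → ECtx → ECtx
  | parR : ECtx → Proc → ECtx

/-- Filling an evaluation context. -/
def ECtx.fill : ECtx → Proc → Proc
  | .hole, Q => Q
  | .parL P E, Q => Proc.par P (E.fill Q)
  | .parR E P, Q => Proc.par (E.fill Q) P

/-- cin(a,P): an input prefix on a occurs anywhere in P. -/
def CInPred (a : ℕ) (P : Proc) : Prop := ∃ (C : Ctx) (Q : Proc), StrEq P (C.fill Q) ∧ InPred a Q

/-- cout(a,P): an output prefix on a occurs anywhere in P. -/
def COutPred (a : ℕ) (P : Proc) : Prop := ∃ (C : Ctx) (Q : Proc), StrEq P (C.fill Q) ∧ OutPred a Q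

/-- P is complete: ∀a. cin(a,P) ⟺ cout(a,P). -/
def Complete (P : Proc) : Prop := ∀ a, CInPred a P ↔ COutPred a P

/-- P is top-complete. -/
def TopComplete (P : Proc) : Prop :=
  ∀ a, (InPred a P → COutPred a P) ∧ (OutPred a P → CInPred a P)

/-- dl(P): P has no reduction and P ≢ 0. -/
def Deadlock (P : Proc) : Prop := (¬ ∃ Q, Red P Q) ∧ ¬ StrEq P nil

/-- Lock-freedom. -/
def LockFree (P : Proc) : Prop :=
  ∀ Q a, Reds P Q → WaitPred a Q → ∃ R, Reds Q R ∧ SyncPred a R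

/-- Top-level input prefixes on a name. -/
def tin (a : ℕ) : Proc → ℕ
  | nil => 0
  | inp b _ => if b = a then 1 else 0
  | out _ _ => 0
  | par P Q => tin a P + tin a Q

/-- Top-level output prefixes on a name. -/
def tout (a : ℕ) : Proc → ℕ
  | nil => 0
  | inp _ _ => 0
  | out b _ => if b = a then 1 else 0
  | par P Q => tout a P + tout a Q

lemma streq_tin {a : ℕ} {P Q : Proc} (h : StrEq P Q) : tin a P = tin a Q := by
  induction h <;> simp_all [tin] <;> omega

lemma streq_tout {a : ℕ} {P Q : Proc} (h : StrEq P Q) : tout a P = tout a Q := by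
  induction h <;> simp_all [tout] <;> omega

lemma streq_inCount {a : ℕ} {P Q : Proc} (h : StrEq P Q) : inCount a P = inCount a Q := by
  induction h <;> simp_all [inCount] <;> omega

lemma streq_outCount {a : ℕ} {P Q : Proc} (h : StrEq P Q) : outCount a P = outCount a Q := by
  induction h <;> simp_all [outCount] <;> omega

lemma inPred_tin {a : ℕ} {P : Proc} (h : InPred a P) : 1 ≤ tin a P := by
  obtain ⟨P', P'', h⟩ := h
  rw [streq_tin h]; simp [tin]

lemma outPred_tout {a : ℕ} {P : Proc} (h : OutPred a P) : 1 ≤ tout a P := by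
  obtain ⟨P', P'', h⟩ := h
  rw [streq_tout h]; simp [tout]

lemma inPred_of_tin {a : ℕ} {P : Proc} (h : 1 ≤ tin a P) : InPred a P := by
  induction P with
  | nil => simp [tin] at h
  | inp b P ih =>
    simp [tin] at h
    split at h
    · subst ‹b = a›
      exact ⟨nil, P, StrEq.symm (StrEq.trans (StrEq.comm _ _) (StrEq.nilPar _))⟩
    · omega
  | out b P ih => simp [tin] at h
  | par P Q ihP ihQ =>
    simp [tin] at h
    by_cases hP : 1 ≤ tin a P
    · obtain ⟨P', P'', hs⟩ := ihP hP
      refine ⟨par P' Q, P'', ?_⟩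
      exact StrEq.trans (StrEq.congPar hs (StrEq.refl Q))
        (StrEq.trans (StrEq.symm (StrEq.assoc _ _ _))
          (StrEq.trans (StrEq.congPar (StrEq.refl _) (StrEq.comm _ _)) (StrEq.assoc _ _ _)))
    · have hQ : 1 ≤ tin a Q := by omega
      obtain ⟨Q', Q'', hs⟩ := ihQ hQ
      exact ⟨par P Q', Q'', StrEq.trans (StrEq.congPar (StrEq.refl P) hs) (StrEq.assoc _ _ _)⟩

lemma outPred_of_tout {a : ℕ} {P : Proc} (h : 1 ≤ tout a P) : OutPred a P := by
  induction P with
  | nil => simp [tout] at h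
  | out b P ih =>
    simp [tout] at h
    split at h
    · subst ‹b = a›
      exact ⟨nil, P, StrEq.symm (StrEq.trans (StrEq.comm _ _) (StrEq.nilPar _))⟩
    · omega
  | inp b P ih => simp [tout] at h
  | par P Q ihP ihQ =>
    simp [tout] at h
    by_cases hP : 1 ≤ tout a P
    · obtain ⟨P', P'', hs⟩ := ihP hP
      refine ⟨par P' Q, P'', ?_⟩
      exact StrEq.trans (StrEq.congPar hs (StrEq.refl Q))
        (StrEq.trans (StrEq.symm (StrEq.assoc _ _ _))
          (StrEq.trans (StrEq.congPar (StrEq.refl _) (StrEq.comm _ _)) (StrEq.assoc _ _ _)))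
    · have hQ : 1 ≤ tout a Q := by omega
      obtain ⟨Q', Q'', hs⟩ := ihQ hQ
      exact ⟨par P Q', Q'', StrEq.trans (StrEq.congPar (StrEq.refl P) hs) (StrEq.assoc _ _ _)⟩

lemma red_sync {P Q : Proc} (h : Red P Q) : ∃ n, 1 ≤ tin n P ∧ 1 ≤ tout n P := by
  induction h with
  | comm a P Q => exact ⟨a, by simp [tin, tout]⟩
  | parL Q _ ih => obtain ⟨n, h1, h2⟩ := ih; exact ⟨n, by simp [tin, tout]; omega⟩
  | parR P _ ih => obtain ⟨n, h1, h2⟩ := ih; exact ⟨n, by simp [tin, tout]; omega⟩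
  | str h1 _ h3 ih =>
    obtain ⟨n, ha, hb⟩ := ih
    exact ⟨n, by rw [streq_tin h1, streq_tout h1]; exact ⟨ha, hb⟩⟩

lemma fill_inCount (x : ℕ) (C : Ctx) (Q : Proc) : inCount x Q ≤ inCount x (C.fill Q) := by
  induction C <;> simp [Ctx.fill, inCount, *] <;> omega

lemma fill_outCount (x : ℕ) (C : Ctx) (Q : Proc) : outCount x Q ≤ outCount x (C.fill Q) := by
  induction C <;> simp [Ctx.fill, outCount, *] <;> omega

lemma cInPred_count {x : ℕ} {P : Proc} (h : CInPred x P) : 1 ≤ inCount x P := by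
  obtain ⟨C, Q, hs, P', P'', hQ⟩ := h
  rw [streq_inCount hs]
  calc 1 ≤ inCount x Q := by rw [streq_inCount hQ]; simp [inCount]; omega
    _ ≤ _ := fill_inCount x C Q

lemma cOutPred_count {x : ℕ} {P : Proc} (h : COutPred x P) : 1 ≤ outCount x P := by
  obtain ⟨C, Q, hs, P', P'', hQ⟩ := h
  rw [streq_outCount hs]
  calc 1 ≤ outCount x Q := by rw [streq_outCount hQ]; simp [outCount]; omega
    _ ≤ _ := fill_outCount x C Q

lemma selfIn (a : ℕ) (P : Proc) : InPred a (inp a P) :=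
  ⟨nil, P, StrEq.symm (StrEq.trans (StrEq.comm _ _) (StrEq.nilPar _))⟩

lemma selfOut (a : ℕ) (P : Proc) : OutPred a (out a P) :=
  ⟨nil, P, StrEq.symm (StrEq.trans (StrEq.comm _ _) (StrEq.nilPar _))⟩

theorem p1_self_deadlocked (a b c : ℕ) (hab : a ≠ b) (hac : a ≠ c) (hbc : b ≠ c) :
    let P₁ : Proc := .par (.par (.inp a (.inp b .nil)) (.out b (.out c .nil)))
                          (.inp c (.out a .nil))
    Deadlock P₁ ∧ TopComplete P₁ ∧ Complete P₁ ∧ ¬ LockFree P₁ := by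
  intro P₁
  have noRed : ¬ ∃ Q, Red P₁ Q := by
    rintro ⟨Q, hQ⟩
    obtain ⟨n, h1, h2⟩ := red_sync hQ
    simp only [P₁, tin, tout] at h1 h2
    split_ifs at h1 h2 <;> simp_all
  -- input witnesses
  have cina : CInPred a P₁ := by
    refine ⟨Ctx.parR (Ctx.parR Ctx.hole (out b (out c nil))) (inp c (out a nil)),
      inp a (inp b nil), StrEq.refl _, selfIn a _⟩
  have cinb : CInPred b P₁ := by
    refine ⟨Ctx.parR (Ctx.parR (Ctx.inp a Ctx.hole) (out b (out c nil))) (inp c (out a nil)),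
      inp b nil, StrEq.refl _, selfIn b _⟩
  have cinc : CInPred c P₁ := by
    refine ⟨Ctx.parL (par (inp a (inp b nil)) (out b (out c nil))) Ctx.hole,
      inp c (out a nil), StrEq.refl _, selfIn c _⟩
  -- output witnesses
  have couta : COutPred a P₁ := by
    refine ⟨Ctx.parL (par (inp a (inp b nil)) (out b (out c nil))) (Ctx.inp c Ctx.hole),
      out a nil, StrEq.refl _, selfOut a _⟩
  have coutb : COutPred b P₁ := by
    refine ⟨Ctx.parR (Ctx.parL (inp a (inp b nil)) Ctx.hole) (inp c (out a nil)),
      out b (out c nil), StrEq.refl _, selfOut b _⟩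
  have coutc : COutPred c P₁ := by
    refine ⟨Ctx.parR (Ctx.parL (inp a (inp b nil)) (Ctx.out b Ctx.hole)) (inp c (out a nil)),
      out c nil, StrEq.refl _, selfOut c _⟩
  have houtb : ∀ x, OutPred x P₁ → x = b := by
    intro x hx
    have := outPred_tout hx
    simp only [P₁, tout] at this
    split_ifs at this <;> simp_all
  have hinac : ∀ x, InPred x P₁ → x = a ∨ x = c := by
    intro x hx
    have := inPred_tin hx
    simp only [P₁, tin] at this
    split_ifs at this <;> simp_all
  refine ⟨⟨noRed, ?_⟩, ?_, ?_, ?_⟩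
  · intro h
    have := streq_tin (a := a) h
    simp [P₁, tin] at this
  · intro x
    constructor
    · intro hx
      rcases hinac x hx with rfl | rfl
      · exact couta
      · exact coutc
    · intro hx
      rcases houtb x hx with rfl
      exact cinb
  · intro x
    constructor
    · intro hx
      have hc := cInPred_count hx
      have hx3 : x = a ∨ x = b ∨ x = c := by
        by_contra hn
        push_neg at hn
        obtain ⟨n1, n2, n3⟩ := hn
        simp only [P₁, inCount] at hc
        simp [Ne.symm n1, Ne.symm n2, Ne.symm n3] at hc
      rcases hx3 with rfl | rfl | rfl
      · exact couta
      · exact coutb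
      · exact coutc
    · intro hx
      have hc := cOutPred_count hx
      have hx3 : x = a ∨ x = b ∨ x = c := by
        by_contra hn
        push_neg at hn
        obtain ⟨n1, n2, n3⟩ := hn
        simp only [P₁, outCount] at hc
        simp [Ne.symm n1, Ne.symm n2, Ne.symm n3] at hc
      rcases hx3 with rfl | rfl | rfl
      · exact cina
      · exact cinb
      · exact cinc
  · intro hLF
    have hwait : WaitPred a P₁ := by
      left
      refine ⟨inPred_of_tin ?_, fun h => hab (houtb a h)⟩
      simp [P₁, tin]
    obtain ⟨R, hR, hsync⟩ := hLF P₁ a Relation.ReflTransGen.refl hwait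
    rcases Relation.ReflTransGen.cases_head hR with rfl | ⟨x, hx, _⟩
    · exact hab (houtb a hsync.2)
    · exact noRed ⟨x, hx⟩
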